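/- Let P be a subset of ℝ² that is ortho-convex, i.e., for any two points of P sharing an x-coordinate or sharing a y-coordinate, the segment between them is contained in P, and suppose P is the region bounded by a closed rectilinear (axis-parallel) polygon that is the union of four xy-monotone chains. Then for any two points p, q ∈ P there exists a path from p to q inside P consisting of axis-parallel segments whose total length is ‖p − q‖₁. -/

import Mathlib

open Set

def Ortho (S : Set (ℝ × ℝ)) : Prop :=
  ∀ a ∈ S, ∀ b ∈ S, (a.1 = b.1 ∨ a.2 = b.2) → segment ℝ a b ⊆ S

lemma seg_fst_const {a b : ℝ × ℝ} (h : a.1 = b.1) : ∀ x ∈ segment ℝ a b, x.1 = a.1 := by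
  rintro x ⟨u, v, hu, hv, huv, rfl⟩
  simp only [Prod.fst_add, Prod.smul_fst, smul_eq_mul, ← h]
  linear_combination a.1 * huv

lemma seg_snd_const {a b : ℝ × ℝ} (h : a.2 = b.2) : ∀ x ∈ segment ℝ a b, x.2 = a.2 := by
  rintro x ⟨u, v, hu, hv, huv, rfl⟩
  simp only [Prod.snd_add, Prod.smul_snd, smul_eq_mul, ← h]
  linear_combination a.2 * huv

lemma mem_seg_vert {a b : ℝ × ℝ} (h : a.1 = b.1) {y : ℝ} (hy : y ∈ segment ℝ a.2 b.2) :
    (a.1, y) ∈ segment ℝ a b := by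
  obtain ⟨u, v, hu, hv, huv, hval⟩ := hy
  refine ⟨u, v, hu, hv, huv, ?_⟩
  apply Prod.ext
  · simp only [Prod.fst_add, Prod.smul_fst, smul_eq_mul, ← h]
    linear_combination a.1 * huv
  · simpa using hval

lemma mem_seg_horiz {a b : ℝ × ℝ} (h : a.2 = b.2) {x : ℝ} (hx : x ∈ segment ℝ a.1 b.1) :
    (x, a.2) ∈ segment ℝ a b := by
  obtain ⟨u, v, hu, hv, huv, hval⟩ := hx
  refine ⟨u, v, hu, hv, huv, ?_⟩
  apply Prod.ext
  · simpa using hval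
  · simp only [Prod.snd_add, Prod.smul_snd, smul_eq_mul, ← h]
    linear_combination a.2 * huv

lemma real_mem_seg {y1 y y2 : ℝ} (h1 : y1 ≤ y) (h2 : y ≤ y2) : y ∈ segment ℝ y1 y2 := by
  rw [segment_eq_Icc (h1.trans h2)]; exact ⟨h1, h2⟩

lemma ortho_inter_convex {S C : Set (ℝ × ℝ)} (hS : Ortho S) (hC : Convex ℝ C) :
    Ortho (S ∩ C) := by
  intro a ha b hb hab x hx
  exact ⟨hS a ha.1 b hb.1 hab hx, hC.segment_subset ha.2 hb.2 hx⟩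

lemma icc_mem_iff {p q r : ℝ × ℝ} :
    r ∈ Icc p q ↔ p.1 ≤ r.1 ∧ r.1 ≤ q.1 ∧ p.2 ≤ r.2 ∧ r.2 ≤ q.2 := by
  simp [Set.mem_Icc, Prod.le_def]; tauto

lemma row_eq_image (K : Set (ℝ × ℝ)) (c : ℝ) :
    {x : ℝ | (x, c) ∈ K} = Prod.fst '' (K ∩ {r | r.2 = c}) := by
  ext x
  constructor
  · intro hx; exact ⟨(x, c), ⟨hx, rfl⟩, rfl⟩
  · rintro ⟨r, ⟨hr, hr2⟩, rfl⟩
    have h2 : r.2 = c := hr2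
    show (r.1, c) ∈ K
    rw [← h2]
    exact hr

lemma col_eq_image (K : Set (ℝ × ℝ)) (c : ℝ) :
    {y : ℝ | (c, y) ∈ K} = Prod.snd '' (K ∩ {r | r.1 = c}) := by
  ext y
  constructor
  · intro hy; exact ⟨(c, y), ⟨hy, rfl⟩, rfl⟩
  · rintro ⟨r, ⟨hr, hr1⟩, rfl⟩
    have h1 : r.1 = c := hr1
    show (c, r.2) ∈ K
    rw [← h1]
    exact hr

lemma row_compact {K : Set (ℝ × ℝ)} (hK : IsCompact K) (c : ℝ) :
    IsCompact {x : ℝ | (x, c) ∈ K} := by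
  rw [row_eq_image]
  exact ((hK.inter_right (isClosed_eq continuous_snd continuous_const)).image continuous_fst)

lemma col_compact {K : Set (ℝ × ℝ)} (hK : IsCompact K) (c : ℝ) :
    IsCompact {y : ℝ | (c, y) ∈ K} := by
  rw [col_eq_image]
  exact ((hK.inter_right (isClosed_eq continuous_fst continuous_const)).image continuous_snd)

-- key connectivity transfer lemma (snd version)

lemma preconn_of_slices_snd {S : Set (ℝ × ℝ)} (hS : IsCompact S)
    (hslice : ∀ c : ℝ, IsPreconnected (S ∩ {r | r.2 = c}))
    (hproj : IsPreconnected (Prod.snd '' S)) : IsPreconnected S := by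
  intro u v hu hv hcov ⟨a, haS, hau⟩ ⟨b, hbS, hbv⟩
  by_contra hne
  rw [Set.not_nonempty_iff_eq_empty] at hne
  have hAeq : S ∩ u = S \ v := by
    ext x; constructor
    · rintro ⟨h1, h2⟩
      refine ⟨h1, fun hxv => ?_⟩
      have : x ∈ S ∩ (u ∩ v) := ⟨h1, h2, hxv⟩
      simp [hne] at this
    · rintro ⟨h1, h2⟩
      rcases hcov h1 with h | h
      · exact ⟨h1, h⟩
      · exact absurd h h2
  have hBeq : S ∩ v = S \ u := by
    ext x; constructor
    · rintro ⟨h1, h2⟩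
      refine ⟨h1, fun hxu => ?_⟩
      have : x ∈ S ∩ (u ∩ v) := ⟨h1, hxu, h2⟩
      simp [hne] at this
    · rintro ⟨h1, h2⟩
      rcases hcov h1 with h | h
      · exact absurd h h2
      · exact ⟨h1, h⟩
  have hAcomp : IsCompact (S ∩ u) := by
    rw [hAeq]; exact hS.of_isClosed_subset (hS.isClosed.sdiff hv) diff_subset
  have hBcomp : IsCompact (S ∩ v) := by
    rw [hBeq]; exact hS.of_isClosed_subset (hS.isClosed.sdiff hu) diff_subset
  have key := isPreconnected_closed_iff.mp hproj (Prod.snd '' (S ∩ u)) (Prod.snd '' (S ∩ v))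
    (hAcomp.image continuous_snd).isClosed (hBcomp.image continuous_snd).isClosed
    (by rintro y ⟨x, hxS, rfl⟩
        rcases hcov hxS with h | h
        · exact Or.inl ⟨x, ⟨hxS, h⟩, rfl⟩
        · exact Or.inr ⟨x, ⟨hxS, h⟩, rfl⟩)
    ⟨a.2, ⟨a, haS, rfl⟩, ⟨a, ⟨haS, hau⟩, rfl⟩⟩
    ⟨b.2, ⟨b, hbS, rfl⟩, ⟨b, ⟨hbS, hbv⟩, rfl⟩⟩
  obtain ⟨y, -, ⟨x1, hx1, hx1y⟩, ⟨x2, hx2, hx2y⟩⟩ := key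
  have := hslice y u v hu hv
    (fun z hz => hcov hz.1)
    ⟨x1, ⟨hx1.1, hx1y⟩, hx1.2⟩
    ⟨x2, ⟨hx2.1, hx2y⟩, hx2.2⟩
  obtain ⟨z, hz1, hz2⟩ := this
  have : z ∈ S ∩ (u ∩ v) := ⟨hz1.1, hz2⟩
  simp [hne] at this

lemma slice_convex_h {S : Set (ℝ × ℝ)} (hS : Ortho S) (c : ℝ) :
    Convex ℝ (S ∩ {r | r.2 = c}) := by
  rw [convex_iff_segment_subset]
  rintro x ⟨hxS, hx2⟩ y ⟨hyS, hy2⟩ z hz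
  have h2 : x.2 = y.2 := by rw [show x.2 = c from hx2, show y.2 = c from hy2]
  exact ⟨hS x hxS y hyS (Or.inr h2) hz, by
    have := seg_snd_const h2 z hz
    simp only [mem_setOf_eq, this]; exact hx2⟩

lemma slice_convex_v {S : Set (ℝ × ℝ)} (hS : Ortho S) (c : ℝ) :
    Convex ℝ (S ∩ {r | r.1 = c}) := by
  rw [convex_iff_segment_subset]
  rintro x ⟨hxS, hx1⟩ y ⟨hyS, hy1⟩ z hz
  have h1 : x.1 = y.1 := by rw [show x.1 = c from hx1, show y.1 = c from hy1]
  exact ⟨hS x hxS y hyS (Or.inl h1) hz, by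
    have := seg_fst_const h1 z hz
    simp only [mem_setOf_eq, this]; exact hx1⟩

lemma convex_snd_le (c : ℝ) : Convex ℝ {r : ℝ × ℝ | r.2 ≤ c} :=
  (convex_Iic c).linear_preimage (LinearMap.snd ℝ ℝ ℝ)

lemma convex_snd_ge (c : ℝ) : Convex ℝ {r : ℝ × ℝ | c ≤ r.2} :=
  (convex_Ici c).linear_preimage (LinearMap.snd ℝ ℝ ℝ)

lemma convex_fst_le (c : ℝ) : Convex ℝ {r : ℝ × ℝ | r.1 ≤ c} :=
  (convex_Iic c).linear_preimage (LinearMap.fst ℝ ℝ ℝ)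

lemma convex_fst_ge (c : ℝ) : Convex ℝ {r : ℝ × ℝ | c ≤ r.1} :=
  (convex_Ici c).linear_preimage (LinearMap.fst ℝ ℝ ℝ)

lemma closed_snd_le (c : ℝ) : IsClosed {r : ℝ × ℝ | r.2 ≤ c} :=
  isClosed_le continuous_snd continuous_const

lemma closed_snd_ge (c : ℝ) : IsClosed {r : ℝ × ℝ | c ≤ r.2} :=
  isClosed_le continuous_const continuous_snd

lemma closed_fst_le (c : ℝ) : IsClosed {r : ℝ × ℝ | r.1 ≤ c} :=
  isClosed_le continuous_fst continuous_const

lemma closed_fst_ge (c : ℝ) : IsClosed {r : ℝ × ℝ | c ≤ r.1} :=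
  isClosed_le continuous_const continuous_fst

lemma preconn_of_slices_fst {S : Set (ℝ × ℝ)} (hS : IsCompact S)
    (hslice : ∀ c : ℝ, IsPreconnected (S ∩ {r | r.1 = c}))
    (hproj : IsPreconnected (Prod.fst '' S)) : IsPreconnected S := by
  intro u v hu hv hcov ⟨a, haS, hau⟩ ⟨b, hbS, hbv⟩
  by_contra hne
  rw [Set.not_nonempty_iff_eq_empty] at hne
  have hAeq : S ∩ u = S \ v := by
    ext x; constructor
    · rintro ⟨h1, h2⟩
      refine ⟨h1, fun hxv => ?_⟩
      have : x ∈ S ∩ (u ∩ v) := ⟨h1, h2, hxv⟩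
      simp [hne] at this
    · rintro ⟨h1, h2⟩
      rcases hcov h1 with h | h
      · exact ⟨h1, h⟩
      · exact absurd h h2
  have hBeq : S ∩ v = S \ u := by
    ext x; constructor
    · rintro ⟨h1, h2⟩
      refine ⟨h1, fun hxu => ?_⟩
      have : x ∈ S ∩ (u ∩ v) := ⟨h1, hxu, h2⟩
      simp [hne] at this
    · rintro ⟨h1, h2⟩
      rcases hcov h1 with h | h
      · exact absurd h h2
      · exact ⟨h1, h⟩
  have hAcomp : IsCompact (S ∩ u) := by
    rw [hAeq]; exact hS.of_isClosed_subset (hS.isClosed.sdiff hv) diff_subset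
  have hBcomp : IsCompact (S ∩ v) := by
    rw [hBeq]; exact hS.of_isClosed_subset (hS.isClosed.sdiff hu) diff_subset
  have key := isPreconnected_closed_iff.mp hproj (Prod.fst '' (S ∩ u)) (Prod.fst '' (S ∩ v))
    (hAcomp.image continuous_fst).isClosed (hBcomp.image continuous_fst).isClosed
    (by rintro y ⟨x, hxS, rfl⟩
        rcases hcov hxS with h | h
        · exact Or.inl ⟨x, ⟨hxS, h⟩, rfl⟩
        · exact Or.inr ⟨x, ⟨hxS, h⟩, rfl⟩)
    ⟨a.1, ⟨a, haS, rfl⟩, ⟨a, ⟨haS, hau⟩, rfl⟩⟩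
    ⟨b.1, ⟨b, hbS, rfl⟩, ⟨b, ⟨hbS, hbv⟩, rfl⟩⟩
  obtain ⟨y, -, ⟨x1, hx1, hx1y⟩, ⟨x2, hx2, hx2y⟩⟩ := key
  have := hslice y u v hu hv
    (fun z hz => hcov hz.1)
    ⟨x1, ⟨hx1.1, hx1y⟩, hx1.2⟩
    ⟨x2, ⟨hx2.1, hx2y⟩, hx2.2⟩
  obtain ⟨z, hz1, hz2⟩ := this
  have : z ∈ S ∩ (u ∩ v) := ⟨hz1.1, hz2⟩
  simp [hne] at this

lemma cut_snd_le {S : Set (ℝ × ℝ)} (hcomp : IsCompact S) (hortho : Ortho S)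
    (hconn : IsPreconnected S) (c : ℝ) : IsPreconnected (S ∩ {r | r.2 ≤ c}) := by
  apply preconn_of_slices_snd (hcomp.inter_right (closed_snd_le c))
  · intro c'
    have heq : (S ∩ {r | r.2 ≤ c}) ∩ {r : ℝ × ℝ | r.2 = c'} =
        (S ∩ {r | r.2 = c'}) ∩ {r | r.2 ≤ c} := by ext r; simp only [mem_inter_iff, mem_setOf_eq]; tauto
    rw [heq]
    exact ((slice_convex_h hortho c').inter (convex_snd_le c)).isPreconnected
  · have heq : Prod.snd '' (S ∩ {r | r.2 ≤ c}) = (Prod.snd '' S) ∩ Iic c := by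
      ext y; constructor
      · rintro ⟨x, ⟨hxS, hxle⟩, rfl⟩; exact ⟨⟨x, hxS, rfl⟩, hxle⟩
      · rintro ⟨⟨x, hxS, rfl⟩, hy⟩; exact ⟨x, ⟨hxS, hy⟩, rfl⟩
    rw [heq, isPreconnected_iff_ordConnected]
    exact ((hconn.image _ continuous_snd.continuousOn).ordConnected).inter ordConnected_Iic

lemma cut_snd_ge {S : Set (ℝ × ℝ)} (hcomp : IsCompact S) (hortho : Ortho S)
    (hconn : IsPreconnected S) (c : ℝ) : IsPreconnected (S ∩ {r | c ≤ r.2}) := by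
  apply preconn_of_slices_snd (hcomp.inter_right (closed_snd_ge c))
  · intro c'
    have heq : (S ∩ {r | c ≤ r.2}) ∩ {r : ℝ × ℝ | r.2 = c'} =
        (S ∩ {r | r.2 = c'}) ∩ {r | c ≤ r.2} := by ext r; simp only [mem_inter_iff, mem_setOf_eq]; tauto
    rw [heq]
    exact ((slice_convex_h hortho c').inter (convex_snd_ge c)).isPreconnected
  · have heq : Prod.snd '' (S ∩ {r | c ≤ r.2}) = (Prod.snd '' S) ∩ Ici c := by
      ext y; constructor
      · rintro ⟨x, ⟨hxS, hxle⟩, rfl⟩; exact ⟨⟨x, hxS, rfl⟩, hxle⟩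
      · rintro ⟨⟨x, hxS, rfl⟩, hy⟩; exact ⟨x, ⟨hxS, hy⟩, rfl⟩
    rw [heq, isPreconnected_iff_ordConnected]
    exact ((hconn.image _ continuous_snd.continuousOn).ordConnected).inter ordConnected_Ici

lemma cut_fst_le {S : Set (ℝ × ℝ)} (hcomp : IsCompact S) (hortho : Ortho S)
    (hconn : IsPreconnected S) (c : ℝ) : IsPreconnected (S ∩ {r | r.1 ≤ c}) := by
  apply preconn_of_slices_fst (hcomp.inter_right (closed_fst_le c))
  · intro c'
    have heq : (S ∩ {r | r.1 ≤ c}) ∩ {r : ℝ × ℝ | r.1 = c'} =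
        (S ∩ {r | r.1 = c'}) ∩ {r | r.1 ≤ c} := by ext r; simp only [mem_inter_iff, mem_setOf_eq]; tauto
    rw [heq]
    exact ((slice_convex_v hortho c').inter (convex_fst_le c)).isPreconnected
  · have heq : Prod.fst '' (S ∩ {r | r.1 ≤ c}) = (Prod.fst '' S) ∩ Iic c := by
      ext y; constructor
      · rintro ⟨x, ⟨hxS, hxle⟩, rfl⟩; exact ⟨⟨x, hxS, rfl⟩, hxle⟩
      · rintro ⟨⟨x, hxS, rfl⟩, hy⟩; exact ⟨x, ⟨hxS, hy⟩, rfl⟩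
    rw [heq, isPreconnected_iff_ordConnected]
    exact ((hconn.image _ continuous_fst.continuousOn).ordConnected).inter ordConnected_Iic

lemma cut_fst_ge {S : Set (ℝ × ℝ)} (hcomp : IsCompact S) (hortho : Ortho S)
    (hconn : IsPreconnected S) (c : ℝ) : IsPreconnected (S ∩ {r | c ≤ r.1}) := by
  apply preconn_of_slices_fst (hcomp.inter_right (closed_fst_ge c))
  · intro c'
    have heq : (S ∩ {r | c ≤ r.1}) ∩ {r : ℝ × ℝ | r.1 = c'} =
        (S ∩ {r | r.1 = c'}) ∩ {r | c ≤ r.1} := by ext r; simp only [mem_inter_iff, mem_setOf_eq]; tauto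
    rw [heq]
    exact ((slice_convex_v hortho c').inter (convex_fst_ge c)).isPreconnected
  · have heq : Prod.fst '' (S ∩ {r | c ≤ r.1}) = (Prod.fst '' S) ∩ Ici c := by
      ext y; constructor
      · rintro ⟨x, ⟨hxS, hxle⟩, rfl⟩; exact ⟨⟨x, hxS, rfl⟩, hxle⟩
      · rintro ⟨⟨x, hxS, rfl⟩, hy⟩; exact ⟨x, ⟨hxS, hy⟩, rfl⟩
    rw [heq, isPreconnected_iff_ordConnected]
    exact ((hconn.image _ continuous_fst.continuousOn).ordConnected).inter ordConnected_Ici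

lemma mem_frontier_dir {P : Set (ℝ × ℝ)} {b d : ℝ × ℝ} {ε : ℝ}
    (hb : b ∈ P) (hd : d ≠ 0) (hε : 0 < ε)
    (h : ∀ δ : ℝ, 0 < δ → δ < ε → b + δ • d ∉ P) : b ∈ frontier P := by
  have hdn : 0 < ‖d‖ := norm_pos_iff.mpr hd
  refine ⟨subset_closure hb, fun hint => ?_⟩
  rw [mem_interior_iff_mem_nhds, Metric.mem_nhds_iff] at hint
  obtain ⟨r, hr, hball⟩ := hint
  set δ := min (ε / 2) (r / (2 * ‖d‖)) with hδ
  have hδ0 : 0 < δ := lt_min (by linarith) (by positivity)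
  have h1 : b + δ • d ∈ Metric.ball b r := by
    have : dist (b + δ • d) b = δ * ‖d‖ := by
      rw [dist_eq_norm]
      simp [norm_smul, abs_of_pos hδ0]
    rw [Metric.mem_ball, this]
    have : δ ≤ r / (2 * ‖d‖) := min_le_right _ _
    calc δ * ‖d‖ ≤ (r / (2 * ‖d‖)) * ‖d‖ := by nlinarith
      _ = r / 2 := by field_simp
      _ < r := by linarith
  exact h δ hδ0 (lt_of_le_of_lt (min_le_left _ _) (by linarith)) (hball h1)

lemma nostuck {P K : Set (ℝ × ℝ)} {p q : ℝ × ℝ}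
    (hK : K = P ∩ Icc p q) (hKcomp : IsCompact K) (hKortho : Ortho K)
    (hKconn : IsPreconnected K)
    {N : ℕ} {L : ℕ → Set (ℝ × ℝ)}
    (hL : ∀ i < N, (∃ c, L i = {r : ℝ × ℝ | r.1 = c}) ∨ (∃ c, L i = {r : ℝ × ℝ | r.2 = c}))
    (hfr : frontier P ⊆ ⋃ i ∈ Finset.range N, L i)
    (hq : q ∈ K) {s : ℝ × ℝ} (hs : s ∈ K)
    (hsx : s.1 < q.1) (hsy : s.2 < q.2)
    (hrow : ∀ x, (x, s.2) ∈ K → x ≤ s.1) (hcol : ∀ y, (s.1, y) ∈ K → y ≤ s.2) : False := by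
  classical
  -- per-line epsilons
  have hle : ∀ i, ∃ ε : ℝ, 0 < ε ∧ (i < N →
      ∀ b ∈ L i, ¬(s.1 < b.1 ∧ b.1 < s.1 + ε ∧ s.2 < b.2 ∧ b.2 < s.2 + ε)) := by
    intro i
    by_cases hi : i < N
    · rcases hL i hi with ⟨c, hc⟩ | ⟨c, hc⟩
      · by_cases hcs : s.1 < c
        · refine ⟨c - s.1, by linarith, fun _ b hb hbad => ?_⟩
          rw [hc] at hb
          have : b.1 = c := hb
          linarith [hbad.2.1, hbad.1]
        · refine ⟨1, one_pos, fun _ b hb hbad => ?_⟩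
          rw [hc] at hb
          have : b.1 = c := hb
          have := hbad.1
          linarith
      · by_cases hcs : s.2 < c
        · refine ⟨c - s.2, by linarith, fun _ b hb hbad => ?_⟩
          rw [hc] at hb
          have : b.2 = c := hb
          linarith [hbad.2.2.2, hbad.2.2.1]
        · refine ⟨1, one_pos, fun _ b hb hbad => ?_⟩
          rw [hc] at hb
          have : b.2 = c := hb
          have := hbad.2.2.1
          linarith
    · exact ⟨1, one_pos, fun h => absurd h hi⟩
  choose εf hεf0 hεf using hle
  set F : Finset ℝ := insert 1 ((Finset.range N).image εf) with hF
  have hFne : F.Nonempty := ⟨1, Finset.mem_insert_self _ _⟩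
  set ε := F.min' hFne with hε
  have hε0 : 0 < ε := by
    have hm := F.min'_mem hFne
    have : ∀ x ∈ F, (0:ℝ) < x := by
      intro x hx
      rcases Finset.mem_insert.mp hx with h | h
      · rw [h]; exact one_pos
      · obtain ⟨i, _, hi⟩ := Finset.mem_image.mp h
        rw [← hi]; exact hεf0 i
    exact this _ hm
  have hεle : ∀ i ∈ Finset.range N, ε ≤ εf i := fun i hi =>
    F.min'_le _ (Finset.mem_insert_of_mem (Finset.mem_image_of_mem _ hi))
  -- the up-right corner set T
  set T := (K ∩ {r | s.1 ≤ r.1}) ∩ {r | s.2 ≤ r.2} with hT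
  have hTconn : IsPreconnected T :=
    cut_snd_ge (hKcomp.inter_right (closed_fst_ge s.1))
      (ortho_inter_convex hKortho (convex_fst_ge s.1))
      (cut_fst_ge hKcomp hKortho hKconn s.1) s.2
  have hsT : s ∈ T := ⟨⟨hs, le_refl s.1⟩, le_refl s.2⟩
  have hqT : q ∈ T := ⟨⟨hq, le_of_lt hsx⟩, le_of_lt hsy⟩
  have hTdichot : ∀ t ∈ T, t = s ∨ (s.1 < t.1 ∧ s.2 < t.2) := by
    rintro t ⟨⟨htK, htx⟩, hty⟩
    rcases eq_or_lt_of_le (show s.1 ≤ t.1 from htx) with h1 | h1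
    · left
      have h2 : t.2 ≤ s.2 := hcol t.2 (by rw [h1]; exact (by simpa using htK))
      have : t.2 = s.2 := le_antisymm h2 hty
      ext
      · exact h1.symm
      · exact this
    rcases eq_or_lt_of_le (show s.2 ≤ t.2 from hty) with h2 | h2
    · left
      have h1' : t.1 ≤ s.1 := hrow t.1 (by rw [h2]; exact (by simpa using htK))
      exact absurd h1' (not_le.mpr h1)
    · exact Or.inr ⟨h1, h2⟩
  -- find a point of K strictly up-right of s within ε
  have hpt : ∃ t ∈ K, s.1 < t.1 ∧ t.1 < s.1 + ε ∧ s.2 < t.2 ∧ t.2 < s.2 + ε := by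
    by_contra hno
    push_neg at hno
    have := hTconn {r : ℝ × ℝ | r.1 < s.1 + ε ∧ r.2 < s.2 + ε}
      {r : ℝ × ℝ | s.1 < r.1 ∧ s.2 < r.2}
      (IsOpen.and ((isOpen_lt continuous_fst continuous_const))
        ((isOpen_lt continuous_snd continuous_const)))
      (IsOpen.and ((isOpen_lt continuous_const continuous_fst))
        ((isOpen_lt continuous_const continuous_snd)))
      (by intro t ht
          rcases hTdichot t ht with rfl | hlt
          · exact Or.inl ⟨by linarith, by linarith⟩
          · exact Or.inr hlt)
      ⟨s, hsT, by constructor <;> [linarith; linarith]⟩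
      ⟨q, hqT, ⟨hsx, hsy⟩⟩
    obtain ⟨t, htT, ⟨ht1, ht2⟩, ht3, ht4⟩ := this
    exact absurd (hno t htT.1.1 ht3 ht1 ht4) (not_le.mpr ht2)
  obtain ⟨t, htK, ht1, ht2, ht3, ht4⟩ := hpt
  -- bottom of the column of K at t.1
  set col := {y : ℝ | (t.1, y) ∈ K} with hcolset
  have hcolne : col.Nonempty := ⟨t.2, by rw [hcolset]; exact htK⟩
  have hcolcomp : IsCompact col := col_compact hKcomp t.1
  set f := sInf col with hf
  have hfmem : f ∈ col := hcolcomp.sInf_mem hcolne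
  have hfK : (t.1, f) ∈ K := hfmem
  have hfle : f ≤ t.2 := csInf_le hcolcomp.bddBelow (by rw [hcolset]; exact htK)
  have hs2notcol : s.2 ∉ col := by
    intro hmem
    exact absurd (hrow t.1 hmem) (not_le.mpr ht1)
  have hfgt : s.2 < f := by
    rcases lt_or_ge s.2 f with h | h
    · exact h
    · exfalso
      apply hs2notcol
      have hseg := hKortho (t.1, f) hfK (t.1, t.2) (by simpa using htK) (Or.inl rfl)
      have : ((t.1 : ℝ), s.2) ∈ segment ℝ ((t.1 : ℝ), f) (t.1, t.2) :=
        mem_seg_vert (a := ((t.1 : ℝ), f)) (b := ((t.1 : ℝ), t.2)) rfl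
          (real_mem_seg h ht3.le)
      exact hseg this
  -- (t.1, f) is a frontier point of P
  have hsIcc : p.1 ≤ s.1 ∧ s.1 ≤ q.1 ∧ p.2 ≤ s.2 ∧ s.2 ≤ q.2 := by
    have := hs; rw [hK] at this; exact icc_mem_iff.mp this.2
  have htIcc : p.1 ≤ t.1 ∧ t.1 ≤ q.1 ∧ p.2 ≤ t.2 ∧ t.2 ≤ q.2 := by
    have := htK; rw [hK] at this; exact icc_mem_iff.mp this.2
  have hbfr : (t.1, f) ∈ frontier P := by
    have hbP : (t.1, f) ∈ P := by rw [hK] at hfK; exact hfK.1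
    refine mem_frontier_dir (d := ((0 : ℝ), (-1 : ℝ))) (ε := f - s.2) hbP
      (by simp [Prod.ext_iff]) (by linarith) ?_
    intro δ hδ0 hδε hPmem
    have hcoord : ((t.1 : ℝ), f) + δ • ((0 : ℝ), (-1 : ℝ)) = (t.1, f - δ) := by
      ext <;> simp <;> ring
    rw [hcoord] at hPmem
    have hKmem : ((t.1 : ℝ), f - δ) ∈ K := by
      rw [hK]
      refine ⟨hPmem, icc_mem_iff.mpr ⟨htIcc.1, htIcc.2.1, ?_, ?_⟩⟩
      · simp only
        linarith [hsIcc.2.2.1]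
      · simp only
        have hfq : f ≤ q.2 := le_trans hfle htIcc.2.2.2
        linarith
    have : f ≤ f - δ := csInf_le hcolcomp.bddBelow hKmem
    linarith
  -- contradiction with the line structure
  have := hfr hbfr
  simp only [Finset.mem_range, Set.mem_iUnion] at this
  obtain ⟨i, hiN, hbi⟩ := this
  refine hεf i hiN (t.1, f) hbi ⟨ht1, ?_, hfgt, ?_⟩
  · have := hεle i (Finset.mem_range.mpr hiN)
    simp only
    linarith
  · have := hεle i (Finset.mem_range.mpr hiN)
    simp only
    linarith

lemma rfront {P K : Set (ℝ × ℝ)} {p q : ℝ × ℝ} (hK : K = P ∩ Icc p q)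
    {s : ℝ × ℝ} (hs : s ∈ K) (hsx : s.1 < q.1)
    (hrow : ∀ x, (x, s.2) ∈ K → x ≤ s.1) : s ∈ frontier P := by
  have hsP : s ∈ P := by rw [hK] at hs; exact hs.1
  have hsIcc : p.1 ≤ s.1 ∧ s.1 ≤ q.1 ∧ p.2 ≤ s.2 ∧ s.2 ≤ q.2 := by
    rw [hK] at hs; exact icc_mem_iff.mp hs.2
  refine mem_frontier_dir (d := ((1 : ℝ), (0 : ℝ))) (ε := q.1 - s.1) hsP
    (by simp [Prod.ext_iff]) (by linarith) ?_
  intro δ hδ0 hδε hPmem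
  have hcoord : s + δ • ((1 : ℝ), (0 : ℝ)) = (s.1 + δ, s.2) := by
    ext <;> simp
  rw [hcoord] at hPmem
  have hKmem : ((s.1 + δ : ℝ), s.2) ∈ K := by
    rw [hK]
    exact ⟨hPmem, icc_mem_iff.mpr ⟨by simp only; linarith [hsIcc.1],
      by simp only; linarith, by simp only; exact hsIcc.2.2.1,
      by simp only; exact hsIcc.2.2.2⟩⟩
  linarith [hrow _ hKmem]

lemma ufront {P K : Set (ℝ × ℝ)} {p q : ℝ × ℝ} (hK : K = P ∩ Icc p q)
    {s : ℝ × ℝ} (hs : s ∈ K) (hsy : s.2 < q.2)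
    (hcol : ∀ y, (s.1, y) ∈ K → y ≤ s.2) : s ∈ frontier P := by
  have hsP : s ∈ P := by rw [hK] at hs; exact hs.1
  have hsIcc : p.1 ≤ s.1 ∧ s.1 ≤ q.1 ∧ p.2 ≤ s.2 ∧ s.2 ≤ q.2 := by
    rw [hK] at hs; exact icc_mem_iff.mp hs.2
  refine mem_frontier_dir (d := ((0 : ℝ), (1 : ℝ))) (ε := q.2 - s.2) hsP
    (by simp [Prod.ext_iff]) (by linarith) ?_
  intro δ hδ0 hδε hPmem
  have hcoord : s + δ • ((0 : ℝ), (1 : ℝ)) = (s.1, s.2 + δ) := by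
    ext <;> simp
  rw [hcoord] at hPmem
  have hKmem : ((s.1 : ℝ), s.2 + δ) ∈ K := by
    rw [hK]
    exact ⟨hPmem, icc_mem_iff.mpr ⟨by simp only; exact hsIcc.1,
      by simp only; exact hsIcc.2.1, by simp only; linarith [hsIcc.2.2.1],
      by simp only; linarith⟩⟩
  linarith [hcol _ hKmem]

noncomputable def rmv (K : Set (ℝ × ℝ)) (s : ℝ × ℝ) : ℝ × ℝ := (sSup {x | (x, s.2) ∈ K}, s.2)

noncomputable def umv (K : Set (ℝ × ℝ)) (s : ℝ × ℝ) : ℝ × ℝ := (s.1, sSup {y | (s.1, y) ∈ K})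

noncomputable def greedy (K : Set (ℝ × ℝ)) (p : ℝ × ℝ) : ℕ → ℝ × ℝ
  | 0 => p
  | (n + 1) => if Even n then rmv K (greedy K p n) else umv K (greedy K p n)

noncomputable def L1 (p q : ℝ × ℝ) : ℝ := |p.1 - q.1| + |p.2 - q.2|

lemma main_path (P : Set (ℝ × ℝ)) (hcomp : IsCompact P) (hconn : IsPreconnected P)
    (hortho : Ortho P) (N : ℕ) (L : ℕ → Set (ℝ × ℝ))
    (hL : ∀ i < N, (∃ c, L i = {r : ℝ × ℝ | r.1 = c}) ∨ (∃ c, L i = {r : ℝ × ℝ | r.2 = c}))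
    (hfr : frontier P ⊆ ⋃ i ∈ Finset.range N, L i)
    (p q : ℝ × ℝ) (hp : p ∈ P) (hq : q ∈ P) (hx : p.1 ≤ q.1) (hy : p.2 ≤ q.2) :
    ∃ (k : ℕ) (w : ℕ → ℝ × ℝ), w 0 = p ∧ w k = q ∧
      (∀ i < k, ((w i).1 = (w (i + 1)).1 ∨ (w i).2 = (w (i + 1)).2) ∧
        segment ℝ (w i) (w (i + 1)) ⊆ P) ∧
      (∑ i ∈ Finset.range k, L1 (w i) (w (i + 1))) = L1 p q := by
  classical
  set K := P ∩ Icc p q with hK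
  have hKsubP : K ⊆ P := inter_subset_left
  have hKcomp : IsCompact K := hcomp.inter_right isClosed_Icc
  have hKortho : Ortho K := ortho_inter_convex hortho (convex_Icc p q)
  have hKconn : IsPreconnected K := by
    have h1 := cut_snd_le hcomp hortho hconn q.2
    have c1comp : IsCompact (P ∩ {r | r.2 ≤ q.2}) := hcomp.inter_right (closed_snd_le q.2)
    have c1ortho := ortho_inter_convex hortho (convex_snd_le q.2)
    have h2 := cut_snd_ge c1comp c1ortho h1 p.2
    have c2comp := c1comp.inter_right (closed_snd_ge p.2)
    have c2ortho := ortho_inter_convex c1ortho (convex_snd_ge p.2)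
    have h3 := cut_fst_le c2comp c2ortho h2 q.1
    have c3comp := c2comp.inter_right (closed_fst_le q.1)
    have c3ortho := ortho_inter_convex c2ortho (convex_fst_le q.1)
    have h4 := cut_fst_ge c3comp c3ortho h3 p.1
    have heq : (((P ∩ {r | r.2 ≤ q.2}) ∩ {r | p.2 ≤ r.2}) ∩ {r | r.1 ≤ q.1}) ∩ {r | p.1 ≤ r.1}
        = K := by
      rw [hK]; ext r
      simp only [mem_inter_iff, mem_setOf_eq, icc_mem_iff]
      tauto
    rwa [heq] at h4
  have hpK : p ∈ K := ⟨hp, icc_mem_iff.mpr ⟨le_refl _, hx, le_refl _, hy⟩⟩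
  have hqK : q ∈ K := ⟨hq, icc_mem_iff.mpr ⟨hx, le_refl _, hy, le_refl _⟩⟩
  have hKIcc : ∀ r ∈ K, p.1 ≤ r.1 ∧ r.1 ≤ q.1 ∧ p.2 ≤ r.2 ∧ r.2 ≤ q.2 :=
    fun r hr => icc_mem_iff.mp hr.2
  set g := greedy K p with hg
  have hstep : ∀ n, g (n + 1) = if Even n then rmv K (g n) else umv K (g n) := fun n => rfl
  have hg0 : g 0 = p := rfl
  have hrmvK : ∀ s ∈ K, rmv K s ∈ K ∧ s.1 ≤ (rmv K s).1 := by
    intro s hs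
    have hne : {x | (x, s.2) ∈ K}.Nonempty := ⟨s.1, by simpa using hs⟩
    have hcp := row_compact hKcomp s.2
    exact ⟨hcp.sSup_mem hne, le_csSup hcp.bddAbove (by simpa using hs)⟩
  have humvK : ∀ s ∈ K, umv K s ∈ K ∧ s.2 ≤ (umv K s).2 := by
    intro s hs
    have hne : {y | (s.1, y) ∈ K}.Nonempty := ⟨s.2, by simpa using hs⟩
    have hcp := col_compact hKcomp s.1
    exact ⟨hcp.sSup_mem hne, le_csSup hcp.bddAbove (by simpa using hs)⟩
  have hgK : ∀ n, g n ∈ K := by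
    intro n
    induction n with
    | zero => exact hpK
    | succ n ih =>
        rw [hstep n]
        by_cases he : Even n
        · rw [if_pos he]; exact (hrmvK _ ih).1
        · rw [if_neg he]; exact (humvK _ ih).1
  have hmono1 : ∀ n, (g n).1 ≤ (g (n + 1)).1 ∧ (g n).2 ≤ (g (n + 1)).2 := by
    intro n
    rw [hstep n]
    by_cases he : Even n
    · rw [if_pos he]; exact ⟨(hrmvK _ (hgK n)).2, le_refl _⟩
    · rw [if_neg he]; exact ⟨le_refl _, (humvK _ (hgK n)).2⟩
  have hmono : ∀ a b, a ≤ b → (g a).1 ≤ (g b).1 ∧ (g a).2 ≤ (g b).2 := by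
    intro a b hab
    induction b with
    | zero => have : a = 0 := Nat.le_zero.mp hab; rw [this]; exact ⟨le_refl _, le_refl _⟩
    | succ b ih =>
        rcases Nat.lt_or_ge a (b + 1) with h | h
        · have hab' : a ≤ b := Nat.lt_succ_iff.mp h
          exact ⟨le_trans (ih hab').1 (hmono1 b).1, le_trans (ih hab').2 (hmono1 b).2⟩
        · have : a = b + 1 := le_antisymm hab h
          rw [this]; exact ⟨le_refl _, le_refl _⟩
  have hrmax : ∀ n, ¬Even n → ∀ x, (x, (g n).2) ∈ K → x ≤ (g n).1 := by
    intro n hodd x hxK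
    have hn0 : n ≠ 0 := by intro h; rw [h] at hodd; exact hodd Even.zero
    obtain ⟨m, rfl⟩ := Nat.exists_eq_succ_of_ne_zero hn0
    have hm : Even m := by
      by_contra h
      exact hodd (Nat.even_add_one.mpr h)
    have hgm : g (m + 1) = rmv K (g m) := by rw [hstep m, if_pos hm]
    have h2 : (g (m + 1)).2 = (g m).2 := by rw [hgm]; rfl
    rw [h2] at hxK
    have := le_csSup (row_compact hKcomp (g m).2).bddAbove (show x ∈ {x | (x, (g m).2) ∈ K} from hxK)
    rw [hgm]
    exact this
  have hcmax : ∀ n, n ≠ 0 → Even n → ∀ y, ((g n).1, y) ∈ K → y ≤ (g n).2 := by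
    intro n hn0 heven y hyK
    obtain ⟨m, rfl⟩ := Nat.exists_eq_succ_of_ne_zero hn0
    have hm : ¬Even m := by
      intro h
      exact (Nat.even_add_one.mp heven) h
    have hgm : g (m + 1) = umv K (g m) := by rw [hstep m, if_neg hm]
    have h1 : (g (m + 1)).1 = (g m).1 := by rw [hgm]; rfl
    rw [h1] at hyK
    have := le_csSup (col_compact hKcomp (g m).1).bddAbove (show y ∈ {y | ((g m).1, y) ∈ K} from hyK)
    rw [hgm]
    exact this
  have hterm : ∃ n, (g n).1 = q.1 ∨ (g n).2 = q.2 := by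
    by_contra hc
    push_neg at hc
    have hlt : ∀ n, (g n).1 < q.1 ∧ (g n).2 < q.2 := fun n =>
      ⟨lt_of_le_of_ne (hKIcc _ (hgK n)).2.1 (hc n).1,
       lt_of_le_of_ne (hKIcc _ (hgK n)).2.2.2 (hc n).2⟩
    have hystrict : ∀ n, ¬Even n → (g n).2 < (g (n + 1)).2 := by
      intro n hodd
      rcases lt_or_ge (g n).2 (g (n + 1)).2 with h | h
      · exact h
      · exfalso
        have heq : (g (n + 1)).2 = (g n).2 := le_antisymm h (hmono1 n).2
        have hgn1 : g (n + 1) = umv K (g n) := by rw [hstep n, if_neg hodd]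
        have hcol : ∀ y, ((g n).1, y) ∈ K → y ≤ (g n).2 := by
          intro y hyK
          have := le_csSup (col_compact hKcomp (g n).1).bddAbove
            (show y ∈ {y | ((g n).1, y) ∈ K} from hyK)
          calc y ≤ sSup {y | ((g n).1, y) ∈ K} := this
            _ = (g (n + 1)).2 := by rw [hgn1]; rfl
            _ = (g n).2 := heq
        exact nostuck hK hKcomp hKortho hKconn hL hfr hqK (hgK n)
          (hlt n).1 (hlt n).2 (hrmax n hodd) hcol
    have hxstrict : ∀ n, n ≠ 0 → Even n → (g n).1 < (g (n + 1)).1 := by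
      intro n hn0 heven
      rcases lt_or_ge (g n).1 (g (n + 1)).1 with h | h
      · exact h
      · exfalso
        have heq : (g (n + 1)).1 = (g n).1 := le_antisymm h (hmono1 n).1
        have hgn1 : g (n + 1) = rmv K (g n) := by rw [hstep n, if_pos heven]
        have hrow : ∀ x, (x, (g n).2) ∈ K → x ≤ (g n).1 := by
          intro x hxK
          have := le_csSup (row_compact hKcomp (g n).2).bddAbove
            (show x ∈ {x | (x, (g n).2) ∈ K} from hxK)
          calc x ≤ sSup {x | (x, (g n).2) ∈ K} := this
            _ = (g (n + 1)).1 := by rw [hgn1]; rfl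
            _ = (g n).1 := heq
        exact nostuck hK hKcomp hKortho hKconn hL hfr hqK (hgK n)
          (hlt n).1 (hlt n).2 hrow (hcmax n hn0 heven)
    have hfro : ∀ n, n ≠ 0 → g n ∈ frontier P := by
      intro n hn0
      by_cases he : Even n
      · exact ufront hK (hgK n) (hlt n).2 (hcmax n hn0 he)
      · exact rfront hK (hgK n) (hlt n).1 (hrmax n he)
    have hstrict2 : ∀ a b, 1 ≤ a → a + 2 ≤ b → (g a).1 < (g b).1 ∧ (g a).2 < (g b).2 := by
      intro a b ha hab
      constructor
      · by_cases he : Even a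
        · calc (g a).1 < (g (a + 1)).1 := hxstrict a (by omega) he
            _ ≤ (g b).1 := (hmono _ _ (by omega)).1
        · calc (g a).1 ≤ (g (a + 1)).1 := (hmono1 a).1
            _ < (g (a + 2)).1 := hxstrict (a + 1) (by omega) (Nat.even_add_one.mpr he)
            _ ≤ (g b).1 := (hmono _ _ (by omega)).1
      · by_cases he : Even a
        · calc (g a).2 ≤ (g (a + 1)).2 := (hmono1 a).2
            _ < (g (a + 2)).2 := hystrict (a + 1) (by
                intro h
                exact (Nat.even_add_one.mp h) he)
            _ ≤ (g b).2 := (hmono _ _ (by omega)).2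
        · calc (g a).2 < (g (a + 1)).2 := hystrict a he
            _ ≤ (g b).2 := (hmono _ _ (by omega)).2
    set I := Finset.Icc 1 (2 * N + 2) with hI
    have hcard : I.card = 2 * N + 2 := by rw [hI, Nat.card_Icc]; omega
    have hch : ∀ n, ∃ i, n ∈ I → (i ∈ Finset.range N ∧ g n ∈ L i) := by
      intro n
      by_cases hn : n ∈ I
      · have h1 : g n ∈ frontier P := hfro n (by
          have := Finset.mem_Icc.mp hn; omega)
        have := hfr h1
        simp only [Set.mem_iUnion, exists_prop] at this
        obtain ⟨i, hi1, hi2⟩ := this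
        exact ⟨i, fun _ => ⟨hi1, hi2⟩⟩
      · exact ⟨0, fun h => absurd h hn⟩
    choose φ hφ using hch
    have hmaps : ∀ n ∈ I, φ n ∈ Finset.range N := fun n hn => (hφ n hn).1
    have hcard2 : (Finset.range N).card * 2 < I.card := by
      rw [hcard, Finset.card_range]; omega
    obtain ⟨i, hiN, hfib⟩ := Finset.exists_lt_card_fiber_of_mul_lt_card_of_maps_to hmaps hcard2
    obtain ⟨a, haf, b, hbf, c, hcf, hab, hac, hbc⟩ := Finset.two_lt_card.mp hfib
    have hafm := Finset.mem_filter.mp haf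
    have hbfm := Finset.mem_filter.mp hbf
    have hcfm := Finset.mem_filter.mp hcf
    set u := min a (min b c) with hu
    set v := max a (max b c) with hv
    have huI : u ∈ I ∧ φ u = i := by
      have : u = a ∨ u = b ∨ u = c := by omega
      rcases this with h | h | h <;> rw [h]
      · exact ⟨hafm.1, hafm.2⟩
      · exact ⟨hbfm.1, hbfm.2⟩
      · exact ⟨hcfm.1, hcfm.2⟩
    have hvI : v ∈ I ∧ φ v = i := by
      have : v = a ∨ v = b ∨ v = c := by omega
      rcases this with h | h | h <;> rw [h]
      · exact ⟨hafm.1, hafm.2⟩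
      · exact ⟨hbfm.1, hbfm.2⟩
      · exact ⟨hcfm.1, hcfm.2⟩
    have hgap : u + 2 ≤ v := by omega
    have hu1 : 1 ≤ u := (Finset.mem_Icc.mp huI.1).1
    have hstr := hstrict2 u v hu1 hgap
    have hgu : g u ∈ L i := by rw [← huI.2]; exact (hφ u huI.1).2
    have hgv : g v ∈ L i := by rw [← hvI.2]; exact (hφ v hvI.1).2
    rcases hL i (Finset.mem_range.mp hiN) with ⟨cc, hcc⟩ | ⟨cc, hcc⟩
    · rw [hcc] at hgu hgv
      have h1 : (g u).1 = cc := hgu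
      have h2 : (g v).1 = cc := hgv
      rw [h1, h2] at hstr
      exact absurd hstr.1 (lt_irrefl cc)
    · rw [hcc] at hgu hgv
      have h1 : (g u).2 = cc := hgu
      have h2 : (g v).2 = cc := hgv
      rw [h1, h2] at hstr
      exact absurd hstr.2 (lt_irrefl cc)
  obtain ⟨n0, hn0⟩ := hterm
  set w : ℕ → ℝ × ℝ := fun i => if i ≤ n0 then g i else q with hw
  have hw0 : w 0 = p := by rw [hw]; simp [hg0]
  have hwk : w (n0 + 1) = q := by rw [hw]; simp
  have hwi : ∀ i ≤ n0, w i = g i := by intro i hi; rw [hw]; simp [hi]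
  have hshare : ∀ i < n0 + 1, (w i).1 = (w (i + 1)).1 ∨ (w i).2 = (w (i + 1)).2 := by
    intro i hi
    rcases Nat.lt_or_ge i n0 with hin | hin
    · rw [hwi i (le_of_lt hin), hwi (i + 1) hin]
      by_cases he : Even i
      · right; rw [hstep i, if_pos he]; rfl
      · left; rw [hstep i, if_neg he]; rfl
    · have hieq : i = n0 := by omega
      rw [hieq, hwi n0 (le_refl _), hwk]
      exact hn0
  have hwK : ∀ i ≤ n0 + 1, w i ∈ K := by
    intro i hi
    rcases Nat.lt_or_ge i (n0 + 1) with hin | hin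
    · rw [hwi i (by omega)]; exact hgK i
    · have : i = n0 + 1 := by omega
      rw [this, hwk]; exact hqK
  have hseg : ∀ i < n0 + 1, segment ℝ (w i) (w (i + 1)) ⊆ P := by
    intro i hi
    exact fun x hx => hKsubP (hKortho (w i) (hwK i (by omega)) (w (i + 1)) (hwK (i + 1) (by omega))
      (hshare i hi) hx)
  have hwmono : ∀ i < n0 + 1, (w i).1 ≤ (w (i + 1)).1 ∧ (w i).2 ≤ (w (i + 1)).2 := by
    intro i hi
    rcases Nat.lt_or_ge i n0 with hin | hin
    · rw [hwi i (le_of_lt hin), hwi (i + 1) hin]; exact hmono1 i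
    · have hieq : i = n0 := by omega
      rw [hieq, hwi n0 (le_refl _), hwk]
      have := hKIcc _ (hgK n0)
      exact ⟨this.2.1, this.2.2.2⟩
  refine ⟨n0 + 1, w, hw0, hwk, fun i hi => ⟨hshare i hi, hseg i hi⟩, ?_⟩
  have hterm1 : ∀ i ∈ Finset.range (n0 + 1),
      L1 (w i) (w (i + 1)) = ((w (i + 1)).1 - (w i).1) + ((w (i + 1)).2 - (w i).2) := by
    intro i hi
    have hm := hwmono i (Finset.mem_range.mp hi)
    rw [L1, abs_of_nonpos (by linarith [hm.1]), abs_of_nonpos (by linarith [hm.2])]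
    ring
  rw [Finset.sum_congr rfl hterm1, Finset.sum_add_distrib,
    Finset.sum_range_sub (fun i => (w i).1), Finset.sum_range_sub (fun i => (w i).2),
    hw0, hwk, L1, abs_of_nonpos (by linarith), abs_of_nonpos (by linarith)]
  ring

lemma chain_preconn (v : ℕ → ℝ × ℝ) :
    ∀ m : ℕ, 0 < m → IsPreconnected (⋃ k ∈ Finset.range m, segment ℝ (v k) (v (k + 1))) := by
  intro m
  induction m with
  | zero => intro h; exact absurd h (lt_irrefl 0)
  | succ m ih =>
      intro _
      rcases Nat.eq_zero_or_pos m with rfl | hm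
      · rw [show (⋃ k ∈ Finset.range 1, segment ℝ (v k) (v (k + 1)))
            = segment ℝ (v 0) (v 1) by simp]
        exact (convex_segment _ _).isPreconnected
      · have hsplit : (⋃ k ∈ Finset.range (m + 1), segment ℝ (v k) (v (k + 1)))
            = segment ℝ (v m) (v (m + 1)) ∪ ⋃ k ∈ Finset.range m, segment ℝ (v k) (v (k + 1)) := by
          rw [Finset.range_add_one]
          simp [Set.biUnion_insert]
        rw [hsplit]
        apply IsPreconnected.union (v m)
        · exact left_mem_segment _ _ _
        · have hm1 : m - 1 + 1 = m := Nat.succ_pred_eq_of_pos hm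
          refine Set.mem_biUnion (Finset.mem_range.mpr (by omega : m - 1 < m)) ?_
          rw [hm1]
          exact right_mem_segment ℝ (v (m - 1)) (v m)
        · exact (convex_segment _ _).isPreconnected
        · exact ih hm

lemma P_preconn {P : Set (ℝ × ℝ)} (hcomp : IsCompact P) {m : ℕ} {v : ℕ → ℝ × ℝ} (hm : 0 < m)
    (hfr : frontier P = ⋃ k ∈ Finset.range m, segment ℝ (v k) (v (k + 1))) :
    IsPreconnected P := by
  have hFpre : IsPreconnected (frontier P) := by rw [hfr]; exact chain_preconn v m hm
  have hFP : frontier P ⊆ P := hcomp.isClosed.frontier_subset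
  have key : ∀ u1 u2 : Set (ℝ × ℝ), IsOpen u1 → IsOpen u2 → P ⊆ u1 ∪ u2 →
      P ∩ (u1 ∩ u2) = ∅ → frontier P ∩ u2 = ∅ → (P ∩ u2).Nonempty → False := by
    intro u1 u2 hu1 hu2 hcov hne hfu hne2
    have hBeq : P ∩ u2 = P \ u1 := by
      ext x; constructor
      · rintro ⟨h1, h2⟩
        refine ⟨h1, fun hxu => ?_⟩
        have : x ∈ P ∩ (u1 ∩ u2) := ⟨h1, hxu, h2⟩
        rw [hne] at this
        exact this
      · rintro ⟨h1, h2⟩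
        rcases hcov h1 with h | h
        · exact absurd h h2
        · exact ⟨h1, h⟩
    have hBclosed : IsClosed (P ∩ u2) := by
      rw [hBeq]; exact hcomp.isClosed.sdiff hu1
    have hBopen : IsOpen (P ∩ u2) := by
      have : P ∩ u2 = interior P ∩ u2 := by
        ext x; constructor
        · rintro ⟨h1, h2⟩
          refine ⟨?_, h2⟩
          by_contra hint
          have : x ∈ frontier P ∩ u2 := ⟨⟨subset_closure h1, hint⟩, h2⟩
          rw [hfu] at this
          exact this
        · rintro ⟨h1, h2⟩
          exact ⟨interior_subset h1, h2⟩
      rw [this]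
      exact isOpen_interior.inter hu2
    rcases isClopen_iff.mp ⟨hBclosed, hBopen⟩ with h | h
    · rw [h] at hne2; exact Set.not_nonempty_empty hne2
    · have : IsCompact (Set.univ : Set (ℝ × ℝ)) := by
        apply hcomp.of_isClosed_subset isClosed_univ
        intro x _
        have : x ∈ P ∩ u2 := by rw [h]; trivial
        exact this.1
      exact noncompact_univ (ℝ × ℝ) this
  intro u1 u2 hu1 hu2 hcov ⟨a, haP, hau⟩ ⟨b, hbP, hbv⟩
  by_contra hne
  rw [Set.not_nonempty_iff_eq_empty] at hne
  have hFsplit : frontier P ∩ u1 = ∅ ∨ frontier P ∩ u2 = ∅ := by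
    by_contra hboth
    push_neg at hboth
    obtain ⟨e1, he1⟩ := hboth.1
    obtain ⟨e2, he2⟩ := hboth.2
    obtain ⟨z, hz1, hz2⟩ := hFpre u1 u2 hu1 hu2 (fun x hx => hcov (hFP hx)) ⟨e1, he1⟩ ⟨e2, he2⟩
    have : z ∈ P ∩ (u1 ∩ u2) := ⟨hFP hz1, hz2⟩
    rw [hne] at this
    exact this
  rcases hFsplit with h | h
  · exact absurd (key u2 u1 hu2 hu1 (fun x hx => (hcov hx).symm)
      (by rw [← hne]; ext x; simp only [mem_inter_iff, mem_setOf_eq]; tauto) h ⟨a, haP, hau⟩) id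
  · exact absurd (key u1 u2 hu1 hu2 hcov hne h ⟨b, hbP, hbv⟩) id

lemma L1_comm (a b : ℝ × ℝ) : L1 a b = L1 b a := by
  simp [L1, abs_sub_comm]

def refl2 : (ℝ × ℝ) ≃ₜ (ℝ × ℝ) := (Homeomorph.refl ℝ).prodCongr (Homeomorph.neg ℝ)

lemma refl2_apply (r : ℝ × ℝ) : refl2 r = (r.1, -r.2) := rfl

lemma refl2_invol (r : ℝ × ℝ) : refl2 (refl2 r) = r := by
  rw [refl2_apply, refl2_apply]; simp

lemma refl2_seg {a b x : ℝ × ℝ} (hx : x ∈ segment ℝ a b) :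
    refl2 x ∈ segment ℝ (refl2 a) (refl2 b) := by
  obtain ⟨u, v, hu, hv, huv, rfl⟩ := hx
  refine ⟨u, v, hu, hv, huv, ?_⟩
  rw [refl2_apply, refl2_apply, refl2_apply]
  ext <;> simp <;> ring

lemma refl2_L1 (a b : ℝ × ℝ) : L1 (refl2 a) (refl2 b) = L1 a b := by
  rw [refl2_apply, refl2_apply]
  simp only [L1]
  congr 1
  rw [show -a.2 - -b.2 = -(a.2 - b.2) by ring, abs_neg]

lemma main_path_down (P : Set (ℝ × ℝ)) (hcomp : IsCompact P) (hconn : IsPreconnected P)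
    (hortho : Ortho P) (N : ℕ) (L : ℕ → Set (ℝ × ℝ))
    (hL : ∀ i < N, (∃ c, L i = {r : ℝ × ℝ | r.1 = c}) ∨ (∃ c, L i = {r : ℝ × ℝ | r.2 = c}))
    (hfr : frontier P ⊆ ⋃ i ∈ Finset.range N, L i)
    (p q : ℝ × ℝ) (hp : p ∈ P) (hq : q ∈ P) (hx : p.1 ≤ q.1) (hy : q.2 ≤ p.2) :
    ∃ (k : ℕ) (w : ℕ → ℝ × ℝ), w 0 = p ∧ w k = q ∧
      (∀ i < k, ((w i).1 = (w (i + 1)).1 ∨ (w i).2 = (w (i + 1)).2) ∧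
        segment ℝ (w i) (w (i + 1)) ⊆ P) ∧
      (∑ i ∈ Finset.range k, L1 (w i) (w (i + 1))) = L1 p q := by
  classical
  set P' := (⇑refl2) '' P with hP'
  have hcomp' : IsCompact P' := hcomp.image refl2.continuous
  have hconn' : IsPreconnected P' := hconn.image _ refl2.continuous.continuousOn
  have hmemP : ∀ x, refl2 x ∈ P' ↔ x ∈ P := by
    intro x
    constructor
    · rintro ⟨y, hy, heq⟩
      have hxy : y = x := by
        have := congrArg (⇑refl2) heq
        rwa [refl2_invol, refl2_invol] at this
      rwa [← hxy]
    · intro hx; exact ⟨x, hx, rfl⟩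
  have hortho' : Ortho P' := by
    rintro a ⟨a', ha', rfl⟩ b ⟨b', hb', rfl⟩ hshare x hx
    have hshare' : a'.1 = b'.1 ∨ a'.2 = b'.2 := by
      rcases hshare with h | h
      · left; rw [refl2_apply, refl2_apply] at h; exact h
      · right; rw [refl2_apply, refl2_apply] at h; simpa using h
    have hseg := hortho a' ha' b' hb' hshare'
    have hx' : refl2 x ∈ segment ℝ a' b' := by
      have := refl2_seg hx
      rwa [refl2_invol, refl2_invol] at this
    have : refl2 x ∈ P := hseg hx'
    have := (hmemP (refl2 x)).mpr this
    rwa [refl2_invol] at this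
  set L' : ℕ → Set (ℝ × ℝ) := fun i => (⇑refl2) '' L i with hL'def
  have hL' : ∀ i < N, (∃ c, L' i = {r : ℝ × ℝ | r.1 = c}) ∨ (∃ c, L' i = {r : ℝ × ℝ | r.2 = c}) := by
    intro i hi
    rcases hL i hi with ⟨c, hc⟩ | ⟨c, hc⟩
    · left
      refine ⟨c, ?_⟩
      rw [hL'def]
      simp only
      rw [hc]
      ext x
      constructor
      · rintro ⟨y, hy, rfl⟩
        rw [refl2_apply]
        exact hy
      · intro hx
        exact ⟨refl2 x, by rw [refl2_apply]; exact hx, refl2_invol x⟩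
    · right
      refine ⟨-c, ?_⟩
      rw [hL'def]
      simp only
      rw [hc]
      ext x
      constructor
      · rintro ⟨y, hy, rfl⟩
        rw [refl2_apply]
        show -y.2 = -c
        rw [show y.2 = c from hy]
      · intro hx
        refine ⟨refl2 x, ?_, refl2_invol x⟩
        rw [refl2_apply]
        show -x.2 = c
        rw [show x.2 = -c from hx]; ring
  have hfr' : frontier P' ⊆ ⋃ i ∈ Finset.range N, L' i := by
    intro x hxfr
    rw [hP', ← Homeomorph.image_frontier] at hxfr
    obtain ⟨y, hy, rfl⟩ := hxfr
    have hmem := hfr hy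
    simp only [Set.mem_iUnion, exists_prop] at hmem ⊢
    obtain ⟨i, hi1, hi2⟩ := hmem
    exact ⟨i, hi1, ⟨y, hi2, rfl⟩⟩
  have hp' : refl2 p ∈ P' := ⟨p, hp, rfl⟩
  have hq' : refl2 q ∈ P' := ⟨q, hq, rfl⟩
  obtain ⟨k, w', hw0, hwk, hst, hsum⟩ := main_path P' hcomp' hconn' hortho' N L' hL' hfr'
    (refl2 p) (refl2 q) hp' hq' (by rw [refl2_apply, refl2_apply]; exact hx)
    (by rw [refl2_apply, refl2_apply]; simpa using hy)
  refine ⟨k, fun i => refl2 (w' i), by show refl2 (w' 0) = p; rw [hw0, refl2_invol],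
    by show refl2 (w' k) = q; rw [hwk, refl2_invol], ?_, ?_⟩
  · intro i hi
    obtain ⟨hsh, hsg⟩ := hst i hi
    constructor
    · rcases hsh with h | h
      · left
        show (refl2 (w' i)).1 = (refl2 (w' (i + 1))).1
        rw [refl2_apply, refl2_apply]
        exact h
      · right
        show (refl2 (w' i)).2 = (refl2 (w' (i + 1))).2
        rw [refl2_apply, refl2_apply]
        simp [h]
    · intro x hx
      have h1 : refl2 x ∈ segment ℝ (w' i) (w' (i + 1)) := by
        have := refl2_seg hx
        rwa [refl2_invol, refl2_invol] at this
      exact (hmemP x).mp (hsg h1)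
  · calc (∑ i ∈ Finset.range k, L1 (refl2 (w' i)) (refl2 (w' (i + 1))))
        = ∑ i ∈ Finset.range k, L1 (w' i) (w' (i + 1)) :=
          Finset.sum_congr rfl (fun i _ => refl2_L1 _ _)
      _ = L1 (refl2 p) (refl2 q) := hsum
      _ = L1 p q := refl2_L1 p q

lemma reverse_path {P : Set (ℝ × ℝ)} {p q : ℝ × ℝ}
    (h : ∃ (k : ℕ) (w : ℕ → ℝ × ℝ), w 0 = q ∧ w k = p ∧
      (∀ i < k, ((w i).1 = (w (i + 1)).1 ∨ (w i).2 = (w (i + 1)).2) ∧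
        segment ℝ (w i) (w (i + 1)) ⊆ P) ∧
      (∑ i ∈ Finset.range k, L1 (w i) (w (i + 1))) = L1 q p) :
    ∃ (k : ℕ) (w : ℕ → ℝ × ℝ), w 0 = p ∧ w k = q ∧
      (∀ i < k, ((w i).1 = (w (i + 1)).1 ∨ (w i).2 = (w (i + 1)).2) ∧
        segment ℝ (w i) (w (i + 1)) ⊆ P) ∧
      (∑ i ∈ Finset.range k, L1 (w i) (w (i + 1))) = L1 p q := by
  obtain ⟨k, w, h0, hk, hst, hsum⟩ := h
  refine ⟨k, fun i => w (k - i), by simp [hk], by simp [h0], ?_, ?_⟩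
  · intro i hi
    have hj : k - i - 1 < k := by omega
    have hj1 : k - i = (k - i - 1) + 1 := by omega
    have hj2 : k - (i + 1) = k - i - 1 := by omega
    obtain ⟨hsh, hsg⟩ := hst (k - i - 1) hj
    constructor
    · show (w (k - i)).1 = (w (k - (i + 1))).1 ∨ (w (k - i)).2 = (w (k - (i + 1))).2
      rw [hj1, hj2]
      rcases hsh with h | h
      · exact Or.inl h.symm
      · exact Or.inr h.symm
    · show segment ℝ (w (k - i)) (w (k - (i + 1))) ⊆ P
      rw [hj1, hj2, segment_symm]
      exact hsg
  · show (∑ i ∈ Finset.range k, L1 (w (k - i)) (w (k - (i + 1)))) = L1 p q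
    have hcongr : ∀ i ∈ Finset.range k,
        L1 (w (k - i)) (w (k - (i + 1))) = (fun j => L1 (w (j + 1)) (w j)) (k - 1 - i) := by
      intro i hi
      have hik := Finset.mem_range.mp hi
      have h1 : k - i = (k - 1 - i) + 1 := by omega
      have h2 : k - (i + 1) = k - 1 - i := by omega
      simp only
      rw [h1, h2]
    rw [Finset.sum_congr rfl hcongr, Finset.sum_range_reflect (fun j => L1 (w (j + 1)) (w j)) k]
    have : ∀ i ∈ Finset.range k, L1 (w (i + 1)) (w i) = L1 (w i) (w (i + 1)) := by
      intro i _; exact L1_comm _ _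
    rw [Finset.sum_congr rfl this, hsum, L1_comm]

def MonoRun (v : ℕ → ℝ × ℝ) (i j : ℕ) : Prop :=
  ((∀ k l, i ≤ k → k ≤ l → l ≤ j → (v k).1 ≤ (v l).1) ∨
   (∀ k l, i ≤ k → k ≤ l → l ≤ j → (v l).1 ≤ (v k).1)) ∧
  ((∀ k l, i ≤ k → k ≤ l → l ≤ j → (v k).2 ≤ (v l).2) ∨
   (∀ k l, i ≤ k → k ≤ l → l ≤ j → (v l).2 ≤ (v k).2))

theorem ortho_convex_polygon_has_l1_shortest_paths (P : Set (ℝ × ℝ))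
    (hortho : ∀ a ∈ P, ∀ b ∈ P, (a.1 = b.1 ∨ a.2 = b.2) → segment ℝ a b ⊆ P)
    (hpoly : ∃ (m : ℕ) (v : ℕ → ℝ × ℝ) (a b c : ℕ),
      0 < m ∧ v m = v 0 ∧
      (∀ k < m, (v k).1 = (v (k + 1)).1 ∨ (v k).2 = (v (k + 1)).2) ∧
      frontier P = ⋃ k ∈ Finset.range m, segment ℝ (v k) (v (k + 1)) ∧
      IsCompact P ∧
      a ≤ b ∧ b ≤ c ∧ c ≤ m ∧
      MonoRun v 0 a ∧ MonoRun v a b ∧ MonoRun v b c ∧ MonoRun v c m) :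
    ∀ p ∈ P, ∀ q ∈ P,
      ∃ (k : ℕ) (w : ℕ → ℝ × ℝ), w 0 = p ∧ w k = q ∧
        (∀ i < k, ((w i).1 = (w (i + 1)).1 ∨ (w i).2 = (w (i + 1)).2) ∧
          segment ℝ (w i) (w (i + 1)) ⊆ P) ∧
        (∑ i ∈ Finset.range k, L1 (w i) (w (i + 1))) = L1 p q := by
  classical
  obtain ⟨m, v, a, b, c, hm, hloop, hax, hfr, hcomp, -, -, -, -, -, -, -⟩ := hpoly
  intro p hp q hq
  have hconn : IsPreconnected P := P_preconn hcomp hm hfr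
  have horth : Ortho P := hortho
  -- axis-parallel lines covering the frontier
  set L : ℕ → Set (ℝ × ℝ) := fun i =>
    if (v i).1 = (v (i + 1)).1 then {r : ℝ × ℝ | r.1 = (v i).1} else {r : ℝ × ℝ | r.2 = (v i).2}
    with hLdef
  have hL : ∀ i < m, (∃ cc, L i = {r : ℝ × ℝ | r.1 = cc}) ∨ (∃ cc, L i = {r : ℝ × ℝ | r.2 = cc}) := by
    intro i hi
    rw [hLdef]
    simp only
    by_cases h : (v i).1 = (v (i + 1)).1
    · left; exact ⟨(v i).1, by rw [if_pos h]⟩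
    · right; exact ⟨(v i).2, by rw [if_neg h]⟩
  have hfrL : frontier P ⊆ ⋃ i ∈ Finset.range m, L i := by
    intro x hx
    rw [hfr] at hx
    simp only [Set.mem_iUnion, exists_prop] at hx ⊢
    obtain ⟨k, hk1, hk2⟩ := hx
    refine ⟨k, hk1, ?_⟩
    rw [hLdef]
    simp only
    by_cases h : (v k).1 = (v (k + 1)).1
    · rw [if_pos h]
      exact seg_fst_const h x hk2
    · rw [if_neg h]
      rcases hax k (Finset.mem_range.mp hk1) with h' | h'
      · exact absurd h' h
      · exact seg_snd_const h' x hk2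
  rcases le_total p.1 q.1 with h1 | h1 <;> rcases le_total p.2 q.2 with h2 | h2
  · exact main_path P hcomp hconn horth m L hL hfrL p q hp hq h1 h2
  · exact main_path_down P hcomp hconn horth m L hL hfrL p q hp hq h1 h2
  · exact reverse_path (main_path_down P hcomp hconn horth m L hL hfrL q p hq hp h1 h2)
  · exact reverse_path (main_path P hcomp hconn horth m L hL hfrL q p hq hp h1 h2)
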